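/- Let ψ_1, ψ_2, ψ_3, ψ_4 be a single-qubit SIC-POVM, i.e., unit vectors in ℂ² with |⟨ψ_i, ψ_j⟩|² = 1/3 for all i ≠ j. Then Σ_{k=1}^4 ψ_k ψ_k† = 2·I, where I is the 2×2 identity matrix. -/

import Mathlib

open Matrix Polynomial
open scoped Kronecker ComplexOrder Classical

noncomputable section

/-- Hermitian inner product on `m → ℂ`, conjugate-linear in the first argument. -/
def cinner {m : Type*} [Fintype m] (v w : m → ℂ) : ℂ :=
  ∑ a, (starRingEnd ℂ) (v a) * w a

/-- A single-qubit SIC-POVM: four unit vectors in ℂ² with pairwise squared overlaps 1/3. -/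
def IsSICPOVM (ψ : Fin 4 → Fin 2 → ℂ) : Prop :=
  (∀ k, cinner (ψ k) (ψ k) = 1) ∧
  ∀ k k', k ≠ k' → ‖cinner (ψ k) (ψ k')‖ ^ 2 = 1 / 3

/-- Tensor product state `ψ_k = ψ_{1,k_1} ⊗ ⋯ ⊗ ψ_{n,k_n}` on `ℂ^(2^n)`,
    whose coordinates are indexed by `Fin n → Fin 2`. -/
def prodState {n : ℕ} (ψ : Fin n → Fin 4 → Fin 2 → ℂ) (k : Fin n → Fin 4) :
    (Fin n → Fin 2) → ℂ :=
  fun x => ∏ i, ψ i (k i) (x i)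

/-- The rank-one projector `ψψ†` onto a vector. -/
def proj {m : Type*} (v : m → ℂ) : Matrix m m ℂ :=
  Matrix.vecMulVec v (star v)

/-- The matrix `Γ = Σ_k (ψ_k ψ_k†)ᵀ ⊗ (ψ_k ψ_k†)`. -/
def Gam {n : ℕ} (ψ : Fin n → Fin 4 → Fin 2 → ℂ) :
    Matrix ((Fin n → Fin 2) × (Fin n → Fin 2)) ((Fin n → Fin 2) × (Fin n → Fin 2)) ℂ :=
  ∑ k : Fin n → Fin 4, (proj (prodState ψ k))ᵀ ⊗ₖ proj (prodState ψ k)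

/-- The maximally entangled vector `φ = (1/√d) Σ_x e_x ⊗ e_x`, `d = 2^n`. -/
def maxEnt (n : ℕ) : (Fin n → Fin 2) × (Fin n → Fin 2) → ℂ :=
  fun p => if p.1 = p.2 then (((Real.sqrt (2 ^ n))⁻¹ : ℝ) : ℂ) else 0


/-!
With `S = Σ_k ψ_k ψ_k†` one has `tr S = 4` and `tr S² = Σ_{k,l} |⟨ψ_k, ψ_l⟩|² = 4 + 12 · 1/3 = 8`.
Hence the Hermitian matrix `S - 2I` satisfies `tr (S - 2I)² = 8 - 4 · 4 + 4 · 2 = 0`, so it vanishes.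
-/

namespace Matrix

variable {n R : Type*} [Fintype n] [DecidableEq n] [CommRing R] [StarRing R] [PartialOrder R]
  [StarOrderedRing R] [NoZeroDivisors R]

theorem IsHermitian.eq_smul_one_of_trace_of_trace_mul_self {A : Matrix n n R}
    (hA : A.IsHermitian) {c : R} (hc : IsSelfAdjoint c) (htr : A.trace = c * Fintype.card n)
    (htr₂ : (A * A).trace = c ^ 2 * Fintype.card n) : A = c • 1 := by
  have hB : (A - c • 1).IsHermitian := hA.sub (isHermitian_one.smul hc)
  have htrB : ((A - c • 1) * (A - c • 1)).trace = 0 := by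
    simp only [sub_mul, mul_sub, Matrix.smul_mul, Matrix.mul_smul, one_mul, mul_one, smul_smul,
      trace_sub, trace_smul, trace_one, smul_eq_mul, htr, htr₂]
    ring
  exact sub_eq_zero.mp (trace_conjTranspose_mul_self_eq_zero_iff.mp (by rwa [hB.eq]))

end Matrix

theorem conjTranspose_proj {m : Type*} (v : m → ℂ) : (proj v)ᴴ = proj v := by
  simp [proj, conjTranspose_vecMulVec]

theorem isHermitian_sum_proj {m ι : Type*} [Fintype ι] (ψ : ι → m → ℂ) :
    (∑ k, proj (ψ k)).IsHermitian := by
  simp [IsHermitian, conjTranspose_sum, conjTranspose_proj]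

section Projectors

variable {m ι : Type*} [Fintype m] [Fintype ι]

theorem trace_proj (v : m → ℂ) : (proj v).trace = cinner v v := by
  simp [proj, cinner, dotProduct, mul_comm]

theorem trace_proj_mul_proj (v w : m → ℂ) :
    (proj v * proj w).trace = (‖cinner v w‖ ^ 2 : ℝ) := by
  have hinner : star v ⬝ᵥ w = cinner v w := rfl
  have hconj : v ⬝ᵥ star w = starRingEnd ℂ (cinner v w) := by
    simp [cinner, dotProduct, mul_comm]
  rw [proj, proj, vecMulVec_mul_vecMulVec, trace_vecMulVec, dotProduct_smul, smul_eq_mul, hconj,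
    hinner, Complex.mul_conj', Complex.ofReal_pow]

theorem trace_sum_proj {ψ : ι → m → ℂ} (hψ : ∀ k, cinner (ψ k) (ψ k) = 1) :
    (∑ k, proj (ψ k)).trace = Fintype.card ι := by
  simp [trace_sum, trace_proj, hψ]

theorem trace_sum_proj_mul_self (ψ : ι → m → ℂ) :
    ((∑ k, proj (ψ k)) * ∑ k, proj (ψ k)).trace = (∑ k, ∑ l, ‖cinner (ψ k) (ψ l)‖ ^ 2 : ℝ) := by
  simp only [Finset.sum_mul, Finset.mul_sum, trace_sum, trace_proj_mul_proj, Complex.ofReal_sum]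
  exact Finset.sum_comm

end Projectors

theorem IsSICPOVM.sum_norm_cinner_sq {ψ : Fin 4 → Fin 2 → ℂ} (hψ : IsSICPOVM ψ) :
    ∑ k, ∑ l, ‖cinner (ψ k) (ψ l)‖ ^ 2 = 8 := by
  have hoverlap : ∀ k l, ‖cinner (ψ k) (ψ l)‖ ^ 2 = if k = l then 1 else 1 / 3 := by
    intro k l
    split_ifs with hkl
    · simp [hkl, hψ.1 l]
    · exact hψ.2 k l hkl
  simp only [hoverlap, Fin.sum_univ_four, Fin.isValue, Fin.reduceEq, ↓reduceIte]
  norm_num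

/-- A single-qubit SIC-POVM resolves the identity: `Σ_k ψ_k ψ_k† = 2 I`. -/
theorem sic_sum_proj (ψ : Fin 4 → Fin 2 → ℂ) (hψ : IsSICPOVM ψ) :
    ∑ k : Fin 4, proj (ψ k) = (2 : ℂ) • (1 : Matrix (Fin 2) (Fin 2) ℂ) := by
  refine (isHermitian_sum_proj ψ).eq_smul_one_of_trace_of_trace_mul_self (.ofNat 2) ?_ ?_
  · rw [trace_sum_proj hψ.1]
    norm_num
  · rw [trace_sum_proj_mul_self, hψ.sum_norm_cinner_sq]
    norm_num
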